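/- Let s ≥ 1 and α = (α_1, …, α_{2s}) ∈ ℝ^{2s} satisfy the order conditions u_1(α) = 1, u_2(α) = 0, u_3(α) = 0, and u_{12}(α) = 0. Then automatically u_{11}(α) = 1/2, u_{21}(α) = 0, and u_{111}(α) = 1/6. That is, the order conditions corresponding to the multi-indices (1,1), (2,1), and (1,1,1) (namely u_{11} = 1/2!, u_{21} = 0, u_{111} = 1/3!) are fulfilled whenever the conditions for u_1, u_2, u_3, u_{12} hold, so they are redundant for a composition method of order 3. -/
import Mathlib


open Finset

/-- `j* = j - 1` if `j` is even, `j* = j` if `j` is odd. -/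
def jstar (j : ℕ) : ℕ := if Even j then j - 1 else j

/-- `u_1(α) = ∑_{j=1}^{2s} α_j`. -/
def u1 (s : ℕ) (α : ℕ → ℝ) : ℝ := ∑ j ∈ Icc 1 (2 * s), α j

/-- `u_2(α) = ∑_{j=1}^{2s} (-1)^j α_j²`. -/
def u2 (s : ℕ) (α : ℕ → ℝ) : ℝ := ∑ j ∈ Icc 1 (2 * s), (-1 : ℝ) ^ j * (α j) ^ 2

/-- `u_3(α) = ∑_{j=1}^{2s} α_j³`. -/
def u3 (s : ℕ) (α : ℕ → ℝ) : ℝ := ∑ j ∈ Icc 1 (2 * s), (α j) ^ 3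

/-- `u_{11}(α) = ∑_{1 ≤ j_1 ≤ j_2*, j_2 ≤ 2s} α_{j_1} α_{j_2}`. -/
def u11 (s : ℕ) (α : ℕ → ℝ) : ℝ :=
  ∑ j2 ∈ Icc 1 (2 * s), (∑ j1 ∈ Icc 1 (jstar j2), α j1) * α j2

/-- `u_{12}(α) = ∑_{1 ≤ j_1 ≤ j_2*, j_2 ≤ 2s} α_{j_1} (-1)^{j_2} α_{j_2}²`. -/
def u12 (s : ℕ) (α : ℕ → ℝ) : ℝ :=
  ∑ j2 ∈ Icc 1 (2 * s), (∑ j1 ∈ Icc 1 (jstar j2), α j1) * ((-1 : ℝ) ^ j2 * (α j2) ^ 2)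

/-- `u_{21}(α) = ∑_{1 ≤ j_1 ≤ j_2*, j_2 ≤ 2s} (-1)^{j_1} α_{j_1}² α_{j_2}`. -/
def u21 (s : ℕ) (α : ℕ → ℝ) : ℝ :=
  ∑ j2 ∈ Icc 1 (2 * s), (∑ j1 ∈ Icc 1 (jstar j2), (-1 : ℝ) ^ j1 * (α j1) ^ 2) * α j2

/-- `u_{111}(α) = ∑_{1 ≤ j_1 ≤ j_2*, j_2 ≤ j_3*, j_3 ≤ 2s} α_{j_1} α_{j_2} α_{j_3}`. -/
def u111 (s : ℕ) (α : ℕ → ℝ) : ℝ :=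
  ∑ j3 ∈ Icc 1 (2 * s),
    (∑ j2 ∈ Icc 1 (jstar j3), (∑ j1 ∈ Icc 1 (jstar j2), α j1) * α j2) * α j3

/-- Partial sum `S_n = ∑_{i=1}^n α_i`. -/
def Sa (α : ℕ → ℝ) (n : ℕ) : ℝ := ∑ i ∈ Icc 1 n, α i

/-- Partial sum `T_n = ∑_{i=1}^n (-1)^i α_i²`. -/
def Ta (α : ℕ → ℝ) (n : ℕ) : ℝ := ∑ i ∈ Icc 1 n, (-1 : ℝ) ^ i * (α i) ^ 2

/-- Partial sum `U_n = ∑_{i=1}^n α_i³`. -/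
def Ua (α : ℕ → ℝ) (n : ℕ) : ℝ := ∑ i ∈ Icc 1 n, (α i) ^ 3

lemma Sa_succ (α : ℕ → ℝ) (n : ℕ) : Sa α (n + 1) = Sa α n + α (n + 1) :=
  Finset.sum_Icc_succ_top (by omega) _

lemma Ta_succ (α : ℕ → ℝ) (n : ℕ) :
    Ta α (n + 1) = Ta α n + (-1 : ℝ) ^ (n + 1) * (α (n + 1)) ^ 2 :=
  Finset.sum_Icc_succ_top (by omega) _

lemma Ua_succ (α : ℕ → ℝ) (n : ℕ) : Ua α (n + 1) = Ua α n + (α (n + 1)) ^ 3 :=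
  Finset.sum_Icc_succ_top (by omega) _

lemma jstar_even {n : ℕ} (h : Even (n + 1)) : jstar (n + 1) = n := by
  simp [jstar, h]

lemma jstar_odd {n : ℕ} (h : Odd (n + 1)) : jstar (n + 1) = n + 1 := by
  simp [jstar, Nat.not_even_iff_odd.mpr h]

/-- Telescoping identity for `u₁₁`-type partial sums. -/
lemma L1 (α : ℕ → ℝ) (n : ℕ) :
    ∑ j ∈ Icc 1 n, Sa α (jstar j) * α j = (Sa α n ^ 2 - Ta α n) / 2 := by
  induction n with
  | zero => simp [Sa, Ta]
  | succ n ih =>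
    rw [Finset.sum_Icc_succ_top (by omega), ih, Sa_succ, Ta_succ]
    rcases Nat.even_or_odd (n + 1) with h | h
    · rw [jstar_even h, h.neg_one_pow]; ring
    · rw [jstar_odd h, h.neg_one_pow, Sa_succ]; ring

/-- Telescoping identity for the symmetrized `u₂₁ + u₁₂` partial sums. -/
lemma L2 (α : ℕ → ℝ) (n : ℕ) :
    ∑ j ∈ Icc 1 n,
      (Ta α (jstar j) * α j + Sa α (jstar j) * ((-1 : ℝ) ^ j * (α j) ^ 2))
      = Sa α n * Ta α n - Ua α n := by
  induction n with
  | zero => simp [Sa, Ta, Ua]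
  | succ n ih =>
    rw [Finset.sum_Icc_succ_top (by omega), ih, Sa_succ, Ta_succ, Ua_succ]
    rcases Nat.even_or_odd (n + 1) with h | h
    · rw [jstar_even h, h.neg_one_pow]; ring
    · rw [jstar_odd h, h.neg_one_pow, Sa_succ, Ta_succ, h.neg_one_pow]; ring

/-- Telescoping identity for the symmetrized cubic partial sums. -/
lemma L3 (α : ℕ → ℝ) (n : ℕ) :
    ∑ j ∈ Icc 1 n,
      (Sa α (jstar j) ^ 2 * α j + (-1 : ℝ) ^ j * Sa α (jstar j) * (α j) ^ 2)
      = (Sa α n ^ 3 - Ua α n) / 3 := by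
  induction n with
  | zero => simp [Sa, Ua]
  | succ n ih =>
    rw [Finset.sum_Icc_succ_top (by omega), ih, Sa_succ, Ua_succ]
    rcases Nat.even_or_odd (n + 1) with h | h
    · rw [jstar_even h, h.neg_one_pow]; ring
    · rw [jstar_odd h, h.neg_one_pow, Sa_succ]; ring

/-- If the order conditions `u_1 = 1`, `u_2 = 0`, `u_3 = 0`, `u_{12} = 0` hold,
then automatically `u_{11} = 1/2`, `u_{21} = 0` and `u_{111} = 1/6`: the order
conditions for the multi-indices `(1,1)`, `(2,1)` and `(1,1,1)` are redundant
for a composition method of order 3. -/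
theorem redundant_order_conditions (s : ℕ) (hs : 1 ≤ s) (α : ℕ → ℝ)
    (h1 : u1 s α = 1) (h2 : u2 s α = 0) (h3 : u3 s α = 0) (h12 : u12 s α = 0) :
    u11 s α = 1 / 2 ∧ u21 s α = 0 ∧ u111 s α = 1 / 6 := by
  have hS : Sa α (2 * s) = 1 := h1
  have hT : Ta α (2 * s) = 0 := h2
  have hU : Ua α (2 * s) = 0 := h3
  have hu11 : u11 s α = 1 / 2 := by
    have e : u11 s α = ∑ j ∈ Icc 1 (2 * s), Sa α (jstar j) * α j := rfl
    rw [e, L1, hS, hT]; norm_num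
  have hu21 : u21 s α = 0 := by
    have h := L2 α (2 * s)
    rw [Finset.sum_add_distrib] at h
    have e1 : (∑ j ∈ Icc 1 (2 * s), Ta α (jstar j) * α j) = u21 s α := rfl
    have e2 : (∑ j ∈ Icc 1 (2 * s),
        Sa α (jstar j) * ((-1 : ℝ) ^ j * (α j) ^ 2)) = u12 s α := rfl
    rw [e1, e2, h12, hS, hT, hU] at h
    linarith
  have hu111 : u111 s α = 1 / 6 := by
    have e : u111 s α
        = ∑ j ∈ Icc 1 (2 * s), (Sa α (jstar j) ^ 2 - Ta α (jstar j)) / 2 * α j := by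
      unfold u111
      refine Finset.sum_congr rfl fun j _ => ?_
      congr 1
      exact L1 α (jstar j)
    have split : (∑ j ∈ Icc 1 (2 * s),
          (Sa α (jstar j) ^ 2 - Ta α (jstar j)) / 2 * α j)
        = (∑ j ∈ Icc 1 (2 * s),
            (Sa α (jstar j) ^ 2 * α j + (-1 : ℝ) ^ j * Sa α (jstar j) * (α j) ^ 2)) / 2
          - (∑ j ∈ Icc 1 (2 * s),
            (Ta α (jstar j) * α j + Sa α (jstar j) * ((-1 : ℝ) ^ j * (α j) ^ 2))) / 2 := by
      rw [div_sub_div_same, ← Finset.sum_sub_distrib, Finset.sum_div]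
      exact Finset.sum_congr rfl fun j _ => by ring
    rw [e, split, L3, L2, hS, hT, hU]; norm_num
  exact ⟨hu11, hu21, hu111⟩
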